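/- Let 0 < ε ≤ 1/2, let X ⊆ ℝ^d be finite and (k,ε)-irreducible with optimal k-means partition X₁,…,X_k, let 1 ≤ i < k, and let C_i be a set of i centers satisfying the invariant P(i). Then for every l ∈ {i+1,…,k} and every x ∈ X_l, Φ(C_i,{x})/Φ(C_i,X_l) ≥ (ε/64)·(1/m_l). -/

import Mathlib

/-!
Let `x ∈ X_l` be served in `C_i` by the center `c` of a covered cluster `X_r`. Optimality of the
partition puts `x` at least as close to `μ_l` as to `μ_r`, and irreducibility, applied to the
`(k-1)`-clustering that serves `X_r` by `μ_l` (or `X_l` by `μ_r`), gives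
`ε Δ_k ≤ m ‖μ_r - μ_l‖²` for `m = m_r` and for `m = m_l`. Since `c` is `(1 + ε/16)`-good for `X_r`,
`16 m_r ‖μ_r - c‖² ≤ ε Δ_k`, and the triangle inequality then bounds `‖μ_r - c‖`, `‖μ_r - μ_l‖` and
`‖μ_l - c‖` by `1`, `4` and `3` times `‖x - c‖`. Hence
`ε Φ(C_i, X_l) ≤ ε (Δ₁(X_l) + m_l ‖μ_l - c‖²) ≤ 64 m_l ‖x - c‖² = 64 m_l Φ(C_i, {x})`.
-/

open Finset
open scoped BigOperators
open Classical

noncomputable section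

/-- Points of `ℝ^d`. -/
abbrev Pt (d : ℕ) := EuclideanSpace ℝ (Fin d)

/-- `Φ(C, X) = Σ_{x ∈ X} min_{c ∈ C} ‖x - c‖²`. -/
noncomputable def Phi {d : ℕ} (C X : Finset (Pt d)) : ℝ :=
  ∑ x ∈ X, sInf ((fun c => ‖x - c‖ ^ 2) '' (C : Set (Pt d)))

/-- The centroid `μ(X)` of a finite set of points. -/
noncomputable def ctr {d : ℕ} (X : Finset (Pt d)) : Pt d :=
  (X.card : ℝ)⁻¹ • ∑ x ∈ X, x

/-- `Δ₁(X) = Φ({μ(X)}, X)`. -/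
noncomputable def Delta1 {d : ℕ} (X : Finset (Pt d)) : ℝ := Phi {ctr X} X

/-- `Δ_k(X)`: the optimal `k`-means cost of `X`. -/
noncomputable def DeltaK {d : ℕ} (k : ℕ) (X : Finset (Pt d)) : ℝ :=
  sInf ((fun C => Phi C X) '' {C : Finset (Pt d) | C.card = k})

/-- `X₁, …, X_k` is an optimal `k`-means partition of `X`. -/
def IsOptPartition {d : ℕ} (k : ℕ) (X : Finset (Pt d)) (Xs : Fin k → Finset (Pt d)) : Prop :=
  (∀ j, (Xs j).Nonempty) ∧
  (∀ j l, j ≠ l → Disjoint (Xs j) (Xs l)) ∧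
  Finset.univ.biUnion Xs = X ∧
  ∑ j, Delta1 (Xs j) = DeltaK k X

/-- `X` is `(k, ε)`-irreducible: `Δ_{k-1}(X) ≥ (1+ε)·Δ_k(X)`. -/
def KIrreducible {d : ℕ} (k : ℕ) (ε : ℝ) (X : Finset (Pt d)) : Prop :=
  (1 + ε) * DeltaK k X ≤ DeltaK (k - 1) X

/-- The invariant `P(i)`: `Ci` consists of the centers `c r` for `r < i` (clusters reindexed
so that the covered clusters come first), each `c r` is a `(1 + ε/16)`-good center for the
optimal cluster `Xs r`, and `Φ(Ci, X) > 0`. -/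
def InvariantP {d k : ℕ} (ε : ℝ) (X : Finset (Pt d)) (Xs : Fin k → Finset (Pt d))
    (i : ℕ) (c : Fin k → Pt d) (Ci : Finset (Pt d)) : Prop :=
  Ci = Finset.image c (Finset.univ.filter (fun r : Fin k => r.val < i)) ∧
  (∀ r : Fin k, r.val < i → Phi {c r} (Xs r) ≤ (1 + ε / 16) * Delta1 (Xs r)) ∧
  0 < Phi Ci X

open scoped RealInnerProductSpace

section KMeansCost

variable {d : ℕ}

lemma phi_singleton_right (C : Finset (Pt d)) (x : Pt d) :
    Phi C {x} = sInf ((fun c => ‖x - c‖ ^ 2) '' (C : Set (Pt d))) :=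
  sum_singleton _ _

lemma phi_eq_sum_phi_singleton (C X : Finset (Pt d)) : Phi C X = ∑ x ∈ X, Phi C {x} := by
  simp only [Phi, sum_singleton]

lemma phi_singleton_right_nonneg (C : Finset (Pt d)) (x : Pt d) : 0 ≤ Phi C {x} := by
  rw [phi_singleton_right]
  exact Real.sInf_nonneg (by rintro _ ⟨c, -, rfl⟩; positivity)

lemma phi_nonneg (C X : Finset (Pt d)) : 0 ≤ Phi C X := by
  rw [phi_eq_sum_phi_singleton]
  exact sum_nonneg fun x _ => phi_singleton_right_nonneg C x

lemma phi_anti {S C : Finset (Pt d)} (hSC : S ⊆ C) (hS : S.Nonempty) (X : Finset (Pt d)) :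
    Phi C X ≤ Phi S X :=
  sum_le_sum fun _ _ => csInf_le_csInf ⟨0, by rintro _ ⟨c, -, rfl⟩; positivity⟩
    (hS.to_set.image _) (Set.image_mono (coe_subset.2 hSC))

lemma exists_mem_phi_singleton_right_eq {C : Finset (Pt d)} (hC : C.Nonempty) (x : Pt d) :
    ∃ c ∈ C, Phi C {x} = ‖x - c‖ ^ 2 := by
  obtain ⟨c, hc, h⟩ := (hC.to_set.image fun c => ‖x - c‖ ^ 2).csInf_mem (C.finite_toSet.image _)
  exact ⟨c, hc, (phi_singleton_right C x).trans h.symm⟩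

lemma phi_singleton_singleton (c x : Pt d) : Phi {c} {x} = ‖x - c‖ ^ 2 := by
  rw [phi_singleton_right, coe_singleton, Set.image_singleton, csInf_singleton]

lemma phi_singleton_left (c : Pt d) (X : Finset (Pt d)) : Phi {c} X = ∑ x ∈ X, ‖x - c‖ ^ 2 := by
  rw [phi_eq_sum_phi_singleton]
  simp only [phi_singleton_singleton]

lemma phi_le_phi_singleton_left_of_mem {C : Finset (Pt d)} {c : Pt d} (hc : c ∈ C)
    (X : Finset (Pt d)) : Phi C X ≤ Phi {c} X :=
  phi_anti (singleton_subset_iff.2 hc) (singleton_nonempty c) X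

lemma phi_singleton_right_le_phi (C : Finset (Pt d)) {x : Pt d} {X : Finset (Pt d)}
    (hx : x ∈ X) : Phi C {x} ≤ Phi C X := by
  rw [phi_eq_sum_phi_singleton C X]
  exact single_le_sum (fun y _ => phi_singleton_right_nonneg C y) hx

lemma phi_eq_phi_singleton_right_add_phi_erase (C : Finset (Pt d)) {x : Pt d}
    {X : Finset (Pt d)} (hx : x ∈ X) : Phi C X = Phi C {x} + Phi C (X.erase x) := by
  rw [phi_eq_sum_phi_singleton C X, phi_eq_sum_phi_singleton C (X.erase x),
    add_sum_erase X (fun y => Phi C {y}) hx]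

lemma nonempty_of_phi_pos {C X : Finset (Pt d)} (h : 0 < Phi C X) : C.Nonempty := by
  rw [nonempty_iff_ne_empty]
  rintro rfl
  simp [Phi] at h

lemma phi_biUnion {k : ℕ} (C : Finset (Pt d)) {Xs : Fin k → Finset (Pt d)}
    (hdisj : ∀ j l, j ≠ l → Disjoint (Xs j) (Xs l)) :
    Phi C (univ.biUnion Xs) = ∑ j, Phi C (Xs j) :=
  sum_biUnion fun j _ l _ h => hdisj j l h

lemma sum_sub_ctr {X : Finset (Pt d)} (hX : X.Nonempty) : ∑ x ∈ X, (x - ctr X) = 0 := by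
  rw [sum_sub_distrib, sum_const, sub_eq_zero, ctr, ← Nat.cast_smul_eq_nsmul ℝ, smul_smul,
    mul_inv_cancel₀ (by exact_mod_cast hX.card_pos.ne'), one_smul]

lemma phi_singleton_left_eq_delta1_add {X : Finset (Pt d)} (hX : X.Nonempty) (c : Pt d) :
    Phi {c} X = Delta1 X + X.card * ‖ctr X - c‖ ^ 2 := by
  have hsplit : ∀ x ∈ X, ‖x - c‖ ^ 2
      = ‖x - ctr X‖ ^ 2 + (2 * ⟪x - ctr X, ctr X - c⟫ + ‖ctr X - c‖ ^ 2) := fun x _ => by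
    rw [← add_assoc, ← norm_add_sq_real, sub_add_sub_cancel]
  rw [Delta1, phi_singleton_left, phi_singleton_left, sum_congr rfl hsplit, sum_add_distrib,
    sum_add_distrib, ← mul_sum, ← sum_inner, sum_sub_ctr hX, inner_zero_left, sum_const,
    nsmul_eq_mul]
  ring

lemma deltaK_le_phi [Infinite (Pt d)] {S : Finset (Pt d)} (hS : S.Nonempty) {n : ℕ}
    (hn : S.card ≤ n) (X : Finset (Pt d)) : DeltaK n X ≤ Phi S X := by
  obtain ⟨C, hSC, hC⟩ := Infinite.exists_superset_card_eq S n hn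
  calc DeltaK n X ≤ Phi C X :=
        csInf_le ⟨0, by rintro _ ⟨C', -, rfl⟩; exact phi_nonneg _ _⟩ ⟨C, hC, rfl⟩
    _ ≤ Phi S X := phi_anti hSC hS X

end KMeansCost

section OptimalPartition

variable {d k : ℕ} {X : Finset (Pt d)} {Xs : Fin k → Finset (Pt d)}

lemma IsOptPartition.delta1_le_deltaK (hopt : IsOptPartition k X Xs) (j : Fin k) :
    Delta1 (Xs j) ≤ DeltaK k X :=
  hopt.2.2.2 ▸ single_le_sum (f := fun j => Delta1 (Xs j)) (fun _ _ => phi_nonneg _ _)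
    (mem_univ j)

lemma IsOptPartition.deltaK_le_deltaK_add_phi_sub_delta1 [Infinite (Pt d)]
    (hopt : IsOptPartition k X Xs) {S : Finset (Pt d)} (hS : S.Nonempty) {n : ℕ}
    (hn : S.card ≤ n) (j₀ : Fin k) (hctr : ∀ j ≠ j₀, ctr (Xs j) ∈ S) :
    DeltaK n X ≤ DeltaK k X + (Phi S (Xs j₀) - Delta1 (Xs j₀)) := by
  obtain ⟨-, hdisj, hunion, hsum⟩ := hopt
  have hrest : ∑ j ∈ univ.erase j₀, Phi S (Xs j) ≤ ∑ j ∈ univ.erase j₀, Delta1 (Xs j) :=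
    sum_le_sum fun j hj => phi_le_phi_singleton_left_of_mem (hctr j (ne_of_mem_erase hj)) _
  calc DeltaK n X ≤ Phi S X := deltaK_le_phi hS hn X
    _ = Phi S (Xs j₀) + ∑ j ∈ univ.erase j₀, Phi S (Xs j) := by
        rw [← hunion, phi_biUnion S hdisj, add_sum_erase _ (fun j => Phi S (Xs j)) (mem_univ j₀)]
    _ ≤ DeltaK k X + (Phi S (Xs j₀) - Delta1 (Xs j₀)) := by
        rw [← hsum, ← add_sum_erase _ (fun j => Delta1 (Xs j)) (mem_univ j₀)]
        linarith

lemma IsOptPartition.norm_sub_ctr_le [Infinite (Pt d)] (hopt : IsOptPartition k X Xs)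
    {l : Fin k} {x : Pt d} (hx : x ∈ Xs l) (j : Fin k) :
    ‖x - ctr (Xs l)‖ ≤ ‖x - ctr (Xs j)‖ := by
  set S := univ.image fun j => ctr (Xs j)
  have hmem : ∀ j, ctr (Xs j) ∈ S := fun j => mem_image_of_mem _ (mem_univ j)
  have hcost := hopt.deltaK_le_deltaK_add_phi_sub_delta1 ⟨_, hmem l⟩ (n := k)
    (card_image_le.trans (by simp)) l fun j _ => hmem j
  have hx_j := phi_le_phi_singleton_left_of_mem (hmem j) {x}
  have hrest := phi_le_phi_singleton_left_of_mem (hmem l) ((Xs l).erase x)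
  rw [phi_singleton_singleton] at hx_j
  rw [phi_eq_phi_singleton_right_add_phi_erase S hx] at hcost
  rw [Delta1, phi_eq_phi_singleton_right_add_phi_erase _ hx, phi_singleton_singleton] at hcost
  exact (pow_le_pow_iff_left₀ (norm_nonneg _) (norm_nonneg _) two_ne_zero).1 (by linarith)

lemma KIrreducible.mul_deltaK_le_card_mul_norm_sub_ctr_sq [Infinite (Pt d)] {ε : ℝ}
    (hirr : KIrreducible k ε X) (hopt : IsOptPartition k X Xs) {r l : Fin k} (hrl : r ≠ l) :
    ε * DeltaK k X ≤ (Xs r).card * ‖ctr (Xs r) - ctr (Xs l)‖ ^ 2 := by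
  set S := (univ.erase r).image fun j => ctr (Xs j)
  have hmem : ∀ j ≠ r, ctr (Xs j) ∈ S := fun j hj =>
    mem_image_of_mem _ (mem_erase.2 ⟨hj, mem_univ j⟩)
  have hcost := hopt.deltaK_le_deltaK_add_phi_sub_delta1 ⟨_, hmem l hrl.symm⟩ (n := k - 1)
    (card_image_le.trans (by simp)) r hmem
  have hr := phi_le_phi_singleton_left_of_mem (hmem l hrl.symm) (Xs r)
  rw [phi_singleton_left_eq_delta1_add (hopt.1 r)] at hr
  unfold KIrreducible at hirr
  linarith

lemma IsOptPartition.bounds_of_good_center [Infinite (Pt d)] {ε : ℝ}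
    (hopt : IsOptPartition k X Xs) (hirr : KIrreducible k ε X) (hε0 : 0 < ε) {r l : Fin k}
    (hrl : r ≠ l) {x : Pt d} (hx : x ∈ Xs l) {c : Pt d}
    (hc : Phi {c} (Xs r) ≤ (1 + ε / 16) * Delta1 (Xs r)) :
    ε * DeltaK k X ≤ 16 * (Xs l).card * ‖x - c‖ ^ 2 ∧ ‖ctr (Xs l) - c‖ ≤ 3 * ‖x - c‖ := by
  set μr := ctr (Xs r)
  set μl := ctr (Xs l)
  have hvor : ‖x - μl‖ ≤ ‖x - μr‖ := hopt.norm_sub_ctr_le hx r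
  have hsepr := hirr.mul_deltaK_le_card_mul_norm_sub_ctr_sq hopt hrl
  have hsepl := hirr.mul_deltaK_le_card_mul_norm_sub_ctr_sq hopt hrl.symm
  have hmr : (0 : ℝ) < (Xs r).card := by exact_mod_cast (hopt.1 r).card_pos
  have hcr : 16 * (Xs r).card * ‖μr - c‖ ^ 2 ≤ ε * DeltaK k X := by
    rw [phi_singleton_left_eq_delta1_add (hopt.1 r)] at hc
    nlinarith [hopt.delta1_le_deltaK r]
  have hxr : ‖x - μr‖ ≤ ‖x - c‖ + ‖μr - c‖ := by
    simpa only [norm_sub_rev c μr] using norm_sub_le_norm_sub_add_norm_sub x c μr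
  have hμμ : ‖μr - μl‖ ≤ 2 * ‖x - μr‖ := by
    have := norm_sub_le_norm_sub_add_norm_sub μr x μl
    rw [norm_sub_rev μr x] at this
    linarith
  have hμlc : ‖μl - c‖ ≤ ‖x - μr‖ + ‖x - c‖ := by
    have := norm_sub_le_norm_sub_add_norm_sub μl x c
    rw [norm_sub_rev μl x] at this
    linarith
  have hμrc : 4 * ‖μr - c‖ ≤ ‖μr - μl‖ := by
    refine (pow_le_pow_iff_left₀ (by positivity) (norm_nonneg _) two_ne_zero).1 ?_
    nlinarith
  refine ⟨?_, by linarith⟩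
  have hμμD : ‖μl - μr‖ ^ 2 ≤ (4 * ‖x - c‖) ^ 2 := by
    rw [norm_sub_rev]
    exact pow_le_pow_left₀ (norm_nonneg _) (by linarith) 2
  nlinarith

lemma IsOptPartition.mul_phi_le_of_good_center [Infinite (Pt d)] {ε : ℝ}
    (hopt : IsOptPartition k X Xs) (hirr : KIrreducible k ε X) (hε0 : 0 < ε) (hε : ε ≤ 1 / 2)
    {r l : Fin k} (hrl : r ≠ l) {x : Pt d} (hx : x ∈ Xs l) {c : Pt d}
    (hc : Phi {c} (Xs r) ≤ (1 + ε / 16) * Delta1 (Xs r)) :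
    0 < ‖x - c‖ ∧ ε * Phi {c} (Xs l) ≤ 64 * (Xs l).card * ‖x - c‖ ^ 2 := by
  obtain ⟨hT, hA⟩ := hopt.bounds_of_good_center hirr hε0 hrl hx hc
  refine ⟨norm_pos_iff.2 (sub_ne_zero.2 fun hxc => ?_), ?_⟩
  · -- with `x = c` the bound on `ε Δ_k` forces `Δ_k = 0`, so `Φ({x}, X_r) = 0` puts `X_r` at `x`
    subst hxc
    obtain ⟨y, hy⟩ := hopt.1 r
    have hyx : y ≠ x := fun h => disjoint_left.1 (hopt.2.1 r l hrl) hy (h ▸ hx)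
    have hT0 : DeltaK k X ≤ 0 := by
      rw [sub_self, norm_zero] at hT
      exact nonpos_of_mul_nonpos_right (by simpa using hT) hε0
    have hΦr : Phi {x} (Xs r) ≤ 0 := hc.trans <|
      mul_nonpos_of_nonneg_of_nonpos (by positivity) ((hopt.delta1_le_deltaK r).trans hT0)
    have hyx' : ‖y - x‖ ^ 2 ≤ 0 :=
      (phi_singleton_singleton x y ▸ phi_singleton_right_le_phi _ hy).trans hΦr
    exact hyx (by simpa [sub_eq_zero] using hyx')
  · rw [phi_singleton_left_eq_delta1_add (hopt.1 l)]
    have hA2 : ‖ctr (Xs l) - c‖ ^ 2 ≤ (3 * ‖x - c‖) ^ 2 :=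
      pow_le_pow_left₀ (norm_nonneg _) hA 2
    calc ε * (Delta1 (Xs l) + (Xs l).card * ‖ctr (Xs l) - c‖ ^ 2)
        ≤ ε * DeltaK k X + 1 / 2 * ((Xs l).card * (3 * ‖x - c‖) ^ 2) := by
          rw [mul_add]
          gcongr
          exact hopt.delta1_le_deltaK l
      _ ≤ 64 * (Xs l).card * ‖x - c‖ ^ 2 := by nlinarith

end OptimalPartition

theorem stmt_9_general {d k : ℕ} (ε : ℝ) (hε0 : 0 < ε) (hε : ε ≤ 1 / 2)
    (X : Finset (Pt d)) (hirr : KIrreducible k ε X)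
    (Xs : Fin k → Finset (Pt d)) (hopt : IsOptPartition k X Xs)
    (i : ℕ)
    (c : Fin k → Pt d) (Ci : Finset (Pt d)) (hinv : InvariantP ε X Xs i c Ci) :
    ∀ l : Fin k, i ≤ l.val → ∀ x ∈ Xs l,
      (ε / 64) * (1 / ((Xs l).card : ℝ)) ≤ Phi Ci {x} / Phi Ci (Xs l) := by
  intro l hl x hx
  obtain ⟨hCi, hgood, hpos⟩ := hinv
  obtain ⟨_, hcr, hxc⟩ := exists_mem_phi_singleton_right_eq (nonempty_of_phi_pos hpos) x
  obtain ⟨r, hri, rfl⟩ : ∃ r : Fin k, r.val < i ∧ c r = _ := by simpa [hCi] using hcr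
  have hrl : r ≠ l := by rintro rfl; omega
  have : Infinite (Pt d) := by
    obtain ⟨y, hy⟩ := hopt.1 r
    have : Nontrivial (Pt d) :=
      ⟨⟨x, y, fun h => disjoint_left.1 (hopt.2.1 l r hrl.symm) hx (h ▸ hy)⟩⟩
    exact Module.Free.infinite ℝ (Pt d)
  obtain ⟨hD, hkey⟩ := hopt.mul_phi_le_of_good_center hirr hε0 hε hrl hx (hgood r hri)
  have hΦ : Phi Ci (Xs l) ≤ Phi {c r} (Xs l) := phi_le_phi_singleton_left_of_mem hcr _
  have hΦpos : 0 < Phi Ci (Xs l) :=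
    (hxc ▸ pow_pos hD 2).trans_le (phi_singleton_right_le_phi Ci hx)
  have hml : (0 : ℝ) < (Xs l).card := by exact_mod_cast (hopt.1 l).card_pos
  rw [hxc, le_div_iff₀ hΦpos]
  calc ε / 64 * (1 / (Xs l).card) * Phi Ci (Xs l)
      ≤ ε / 64 * (1 / (Xs l).card) * Phi {c r} (Xs l) := by gcongr
    _ = ε * Phi {c r} (Xs l) / (64 * (Xs l).card) := by field_simp
    _ ≤ ‖x - c r‖ ^ 2 := by rw [div_le_iff₀ (by linarith)]; linarith

/-- Under the invariant `P(i)` (clusters reindexed so the covered clusters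
are `X₁, …, X_i`), for every uncovered cluster `X_l`, `l ∈ {i+1, …, k}`, and every
`x ∈ X_l`, `Φ(C_i, {x})/Φ(C_i, X_l) ≥ (ε/64)·(1/m_l)`. -/
theorem stmt_9 {d k : ℕ} (ε : ℝ) (hε0 : 0 < ε) (hε : ε ≤ 1 / 2)
    (X : Finset (Pt d)) (hirr : KIrreducible k ε X)
    (Xs : Fin k → Finset (Pt d)) (hopt : IsOptPartition k X Xs)
    (i : ℕ) (hi : 1 ≤ i) (hik : i < k)
    (c : Fin k → Pt d) (Ci : Finset (Pt d)) (hinv : InvariantP ε X Xs i c Ci) :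
    ∀ l : Fin k, i ≤ l.val → ∀ x ∈ Xs l,
      (ε / 64) * (1 / ((Xs l).card : ℝ)) ≤ Phi Ci {x} / Phi Ci (Xs l) :=
  stmt_9_general ε hε0 hε X hirr Xs hopt i c Ci hinv
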